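/- arXiv:1811.11502 — 3 statements merged into one kernel-verified Lean document; each statement's English description precedes it below -/
import Mathlib

section
/- (Positivity of the second-order scheme S1.) Let N ≥ 2, Δx > 0, Δt > 0. Suppose ρⁿ, ρⁿ⁺¹ ∈ ℝᴺ and real interior interface velocities u_{i+1/2} (i = 1,…,N−1) satisfy: F_{i+1/2} = ρᴱ_i·u_{i+1/2}⁺ + ρᵂ_{i+1}·u_{i+1/2}⁻ for i = 1,…,N−1, where ρᴱ, ρᵂ are the second-order minmod reconstructions of ρⁿ with θ = 2; F_{1/2} = F_{N+1/2} = 0 (no-flux boundary conditions); and ρⁿ⁺¹_i = ρⁿ_i − (Δt/Δx)(F_{i+1/2} − F_{i−1/2}) for every i = 1,…,N. If ρⁿ_i ≥ 0 for all i and the CFL condition 2·Δt·max(u_{i+1/2}⁺, −u_{i+1/2}⁻) ≤ Δx holds for every i = 1,…,N−1, then ρⁿ⁺¹_i ≥ 0 for all i. -/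
/-- The minmod limiter: `min` if all arguments are positive, `max` if all are negative,
and `0` otherwise. -/
noncomputable def minmod3 (a b c : ℝ) : ℝ :=
  if 0 < a ∧ 0 < b ∧ 0 < c then min a (min b c)
  else if a < 0 ∧ b < 0 ∧ c < 0 then max a (max b c)
  else 0

/-- The minmod mslope (θ = 2, mesh `dx`) of a vector `ρ` indexed by `1,…,N`:
interior cells `2 ≤ i ≤ N−1` use the minmod limiter; the first and last cells get `0`. -/
noncomputable def mslope (N : ℕ) (dx : ℝ) (ρ : ℕ → ℝ) (i : ℕ) : ℝ :=
  if 2 ≤ i ∧ i ≤ N - 1 then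
    minmod3 (2 * (ρ (i + 1) - ρ i) / dx)
      ((ρ (i + 1) - ρ (i - 1)) / (2 * dx))
      (2 * (ρ i - ρ (i - 1)) / dx)
  else 0

/-- East reconstruction: `ρᴱ_i = ρ_i + (dx/2)·σ_i`. -/
noncomputable def recE (N : ℕ) (dx : ℝ) (ρ : ℕ → ℝ) (i : ℕ) : ℝ :=
  ρ i + dx / 2 * mslope N dx ρ i

/-- West reconstruction: `ρᵂ_i = ρ_i − (dx/2)·σ_i`. -/
noncomputable def recW (N : ℕ) (dx : ℝ) (ρ : ℕ → ℝ) (i : ℕ) : ℝ :=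
  ρ i - dx / 2 * mslope N dx ρ i

/-- Positive part `z⁺ = max(z,0)`. -/
noncomputable def pospart (z : ℝ) : ℝ := max z 0

/-- Negative part `z⁻ = min(z,0)`. -/
noncomputable def negpart (z : ℝ) : ℝ := min z 0


/-!
Since `ρ_i = (ρᴱ_i + ρᵂ_i) / 2` and the minmod limiter keeps both reconstructed values
nonnegative, it suffices that upwinding bounds the outgoing flux by `ρᴱ_i u⁺_{i+1/2}` and the
incoming flux from below by `ρᵂ_i u⁻_{i-1/2}`: with `λ = Δt/Δx` this gives
`ρⁿ⁺¹_i ≥ ρᴱ_i (1/2 − λ u⁺_{i+1/2}) + ρᵂ_i (1/2 + λ u⁻_{i-1/2})`, which is nonnegative under the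
CFL condition. At the boundary the missing flux is zero, so the same bound holds with velocity `0`.
-/

lemma min_zero_le_minmod3 (a b c : ℝ) : min 0 a ≤ minmod3 a b c := by
  unfold minmod3
  split_ifs with hpos hneg
  · exact (min_le_left 0 a).trans (lt_min hpos.1 (lt_min hpos.2.1 hpos.2.2)).le
  · exact (min_le_right 0 a).trans (le_max_left _ _)
  · exact min_le_left 0 a

lemma minmod3_le_max_zero (a b c : ℝ) : minmod3 a b c ≤ max 0 c := by
  unfold minmod3
  split_ifs with hpos hneg
  · exact ((min_le_right _ _).trans (min_le_right _ _)).trans (le_max_right 0 c)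
  · exact (max_lt hneg.1 (max_lt hneg.2.1 hneg.2.2)).le.trans (le_max_left 0 c)
  · exact le_max_left 0 c

section Reconstruction

variable {N : ℕ} {dx : ℝ} {ρ : ℕ → ℝ} {i : ℕ}

lemma min_zero_le_mslope : min 0 (2 * (ρ (i + 1) - ρ i) / dx) ≤ mslope N dx ρ i := by
  unfold mslope
  split_ifs
  · exact min_zero_le_minmod3 _ _ _
  · exact min_le_left _ _

lemma mslope_le_max_zero : mslope N dx ρ i ≤ max 0 (2 * (ρ i - ρ (i - 1)) / dx) := by
  unfold mslope
  split_ifs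
  · exact minmod3_le_max_zero _ _ _
  · exact le_max_left _ _

lemma mslope_one : mslope N dx ρ 1 = 0 := by
  simp [mslope]

lemma mslope_self : mslope N dx ρ N = 0 :=
  if_neg (by omega)

lemma recE_add_recW : recE N dx ρ i + recW N dx ρ i = 2 * ρ i := by
  unfold recE recW
  ring

variable (hdx : 0 < dx) (hpos : ∀ j, 1 ≤ j → j ≤ N → 0 ≤ ρ j)
include hdx hpos

lemma recE_nonneg (hi : 1 ≤ i) (hiN : i ≤ N) : 0 ≤ recE N dx ρ i := by
  obtain hlt | rfl := hiN.lt_or_eq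
  · have hρi := hpos i hi hiN
    have hρnext := hpos (i + 1) (by omega) hlt
    rcases min_le_iff.1 (@min_zero_le_mslope N dx ρ i) with h | h
    · have : 0 ≤ dx / 2 * mslope N dx ρ i := by positivity
      unfold recE
      linarith
    · have : ρ (i + 1) - ρ i ≤ dx / 2 * mslope N dx ρ i := by
        calc ρ (i + 1) - ρ i = dx / 2 * (2 * (ρ (i + 1) - ρ i) / dx) := by field_simp
          _ ≤ dx / 2 * mslope N dx ρ i := by gcongr
      unfold recE
      linarith
  · simpa [recE, mslope_self] using hpos i hi le_rfl

lemma recW_nonneg (hi : 1 ≤ i) (hiN : i ≤ N) : 0 ≤ recW N dx ρ i := by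
  obtain rfl | hlt := hi.eq_or_lt
  · simpa [recW, mslope_one] using hpos 1 le_rfl hiN
  · have hρi := hpos i hi hiN
    have hρprev := hpos (i - 1) (by omega) (by omega)
    rcases le_max_iff.1 (@mslope_le_max_zero N dx ρ i) with h | h
    · have : dx / 2 * mslope N dx ρ i ≤ 0 := mul_nonpos_of_nonneg_of_nonpos (by positivity) h
      unfold recW
      linarith
    · have : dx / 2 * mslope N dx ρ i ≤ ρ i - ρ (i - 1) := by
        calc dx / 2 * mslope N dx ρ i ≤ dx / 2 * (2 * (ρ i - ρ (i - 1)) / dx) := by gcongr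
          _ = ρ i - ρ (i - 1) := by field_simp
      unfold recW
      linarith

end Reconstruction

lemma upwind_flux_le_pospart {E W : ℝ} (u : ℝ) (hW : 0 ≤ W) :
    E * pospart u + W * negpart u ≤ E * pospart u :=
  add_le_of_nonpos_right (mul_nonpos_of_nonneg_of_nonpos hW (min_le_right u 0))

lemma negpart_le_upwind_flux {E W : ℝ} (u : ℝ) (hE : 0 ≤ E) :
    W * negpart u ≤ E * pospart u + W * negpart u :=
  le_add_of_nonneg_left (mul_nonneg hE (le_max_right u 0))

lemma cell_update_nonneg {dx dt ρ E W Fin Fout p n : ℝ} (hdx : 0 < dx) (hdt : 0 ≤ dt)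
    (hρ : E + W = 2 * ρ) (hE : 0 ≤ E) (hW : 0 ≤ W)
    (hout : Fout ≤ E * p) (hin : W * n ≤ Fin)
    (hp : 2 * dt * p ≤ dx) (hn : 2 * dt * -n ≤ dx) :
    0 ≤ ρ - dt / dx * (Fout - Fin) := by
  rw [sub_nonneg, div_mul_eq_mul_div, div_le_iff₀ hdx]
  calc dt * (Fout - Fin) ≤ dt * (E * p - W * n) := by gcongr
    _ = E * (dt * p) + W * (dt * -n) := by ring
    _ ≤ E * (dx / 2) + W * (dx / 2) := by gcongr <;> linarith
    _ = ρ * dx := by linear_combination dx / 2 * hρ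

theorem stmt_4_general (N : ℕ) (dx dt : ℝ) (hdx : 0 < dx) (hdt : 0 < dt)
    (ρn ρn1 u F : ℕ → ℝ)
    (hF : ∀ i, 1 ≤ i → i ≤ N - 1 →
      F i = recE N dx ρn i * pospart (u i) + recW N dx ρn (i + 1) * negpart (u i))
    (hF0 : F 0 = 0) (hFN : F N = 0)
    (hupd : ∀ i, 1 ≤ i → i ≤ N → ρn1 i = ρn i - dt / dx * (F i - F (i - 1)))
    (hpos : ∀ i, 1 ≤ i → i ≤ N → 0 ≤ ρn i)
    (hCFL : ∀ i, 1 ≤ i → i ≤ N - 1 →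
      2 * dt * max (pospart (u i)) (-negpart (u i)) ≤ dx) :
    ∀ i, 1 ≤ i → i ≤ N → 0 ≤ ρn1 i := by
  have hCFL' : ∀ i, 1 ≤ i → i ≤ N - 1 →
      2 * dt * pospart (u i) ≤ dx ∧ 2 * dt * -negpart (u i) ≤ dx := fun i hi hiN =>
    ⟨(mul_le_mul_of_nonneg_left (le_max_left _ _) (by positivity)).trans (hCFL i hi hiN),
      (mul_le_mul_of_nonneg_left (le_max_right _ _) (by positivity)).trans (hCFL i hi hiN)⟩
  intro i hi hiN
  obtain ⟨p, hout, hp⟩ : ∃ p, F i ≤ recE N dx ρn i * p ∧ 2 * dt * p ≤ dx := by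
    obtain hlt | rfl := hiN.lt_or_eq
    · refine ⟨pospart (u i), ?_, (hCFL' i hi (by omega)).1⟩
      rw [hF i hi (by omega)]
      exact upwind_flux_le_pospart _ (recW_nonneg hdx hpos (by omega) hlt)
    · exact ⟨0, by simp [hFN], by linarith⟩
  obtain ⟨n, hin, hn⟩ : ∃ n, recW N dx ρn i * n ≤ F (i - 1) ∧ 2 * dt * -n ≤ dx := by
    obtain rfl | hlt := hi.eq_or_lt
    · exact ⟨0, by simp [hF0], by linarith⟩
    · refine ⟨negpart (u (i - 1)), ?_, (hCFL' (i - 1) (by omega) (by omega)).2⟩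
      rw [hF (i - 1) (by omega) (by omega), Nat.sub_add_cancel hi]
      exact negpart_le_upwind_flux _ (recE_nonneg hdx hpos (by omega) (by omega))
  rw [hupd i hi hiN]
  exact cell_update_nonneg hdx hdt.le recE_add_recW (recE_nonneg hdx hpos hi hiN)
    (recW_nonneg hdx hpos hi hiN) hout hin hp hn

/-- positivity of the second-order scheme S1 under the CFL condition
`2·Δt·max(u⁺, −u⁻) ≤ Δx` at every interior interface, for arbitrary interface
velocities and no-flux boundary conditions. -/
theorem stmt_4 (N : ℕ) (hN : 2 ≤ N) (dx dt : ℝ) (hdx : 0 < dx) (hdt : 0 < dt)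
    (ρn ρn1 u F : ℕ → ℝ)
    (hF : ∀ i, 1 ≤ i → i ≤ N - 1 →
      F i = recE N dx ρn i * pospart (u i) + recW N dx ρn (i + 1) * negpart (u i))
    (hF0 : F 0 = 0) (hFN : F N = 0)
    (hupd : ∀ i, 1 ≤ i → i ≤ N → ρn1 i = ρn i - dt / dx * (F i - F (i - 1)))
    (hpos : ∀ i, 1 ≤ i → i ≤ N → 0 ≤ ρn i)
    (hCFL : ∀ i, 1 ≤ i → i ≤ N - 1 →
      2 * dt * max (pospart (u i)) (-negpart (u i)) ≤ dx) :
    ∀ i, 1 ≤ i → i ≤ N → 0 ≤ ρn1 i :=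
  stmt_4_general N dx dt hdx hdt ρn ρn1 u F hF hF0 hFN hupd hpos hCFL
end

section
/- (Positivity of the first-order explicit-reconstruction scheme.) Let N ≥ 2, Δx > 0, Δt > 0. Suppose ρⁿ, ρⁿ⁺¹ ∈ ℝᴺ and real interior interface velocities u_{i+1/2} (i = 1,…,N−1) satisfy F_{i+1/2} = ρⁿ_i·u_{i+1/2}⁺ + ρⁿ_{i+1}·u_{i+1/2}⁻ for i = 1,…,N−1, F_{1/2} = F_{N+1/2} = 0, and ρⁿ⁺¹_i = ρⁿ_i − (Δt/Δx)(F_{i+1/2} − F_{i−1/2}) for every i. If ρⁿ_i ≥ 0 for all i and Δt·(u_{i+1/2}⁺ − u_{i−1/2}⁻) ≤ Δx for every i = 1,…,N (with the conventions u_{1/2} = u_{N+1/2} = 0), then ρⁿ⁺¹_i ≥ 0 for all i. -/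
lemma pospart_nonneg (z : ℝ) : 0 ≤ pospart z := le_max_right z 0

lemma negpart_nonpos (z : ℝ) : negpart z ≤ 0 := min_le_right z 0

lemma explicit_update_nonneg {ρ r Fl Fr ul ur : ℝ} (hr : 0 ≤ r) (hρ : 0 ≤ ρ)
    (hFr : Fr ≤ ρ * pospart ur) (hFl : ρ * negpart ul ≤ Fl)
    (hCFL : r * (pospart ur - negpart ul) ≤ 1) :
    0 ≤ ρ - r * (Fr - Fl) :=
  calc 0 ≤ ρ * (1 - r * (pospart ur - negpart ul)) := mul_nonneg hρ (by linarith)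
    _ = ρ - r * (ρ * pospart ur - ρ * negpart ul) := by ring
    _ ≤ ρ - r * (Fr - Fl) := by gcongr

section UpwindFlux

variable {N : ℕ} {ρ u F : ℕ → ℝ}

lemma upwind_flux_le_outflow (huN : u N = 0)
    (hF : ∀ i, 1 ≤ i → i ≤ N - 1 → F i = ρ i * pospart (u i) + ρ (i + 1) * negpart (u i))
    (hFN : F N = 0) (hpos : ∀ i, 1 ≤ i → i ≤ N → 0 ≤ ρ i)
    {i : ℕ} (hi1 : 1 ≤ i) (hiN : i ≤ N) :
    F i ≤ ρ i * pospart (u i) := by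
  rcases hiN.eq_or_lt with rfl | hlt
  · simp [hFN, huN, pospart]
  · rw [hF i hi1 (by omega), add_le_iff_nonpos_right]
    exact mul_nonpos_of_nonneg_of_nonpos (hpos (i + 1) (by omega) hlt) (negpart_nonpos _)

lemma inflow_le_upwind_flux (hu0 : u 0 = 0)
    (hF : ∀ i, 1 ≤ i → i ≤ N - 1 → F i = ρ i * pospart (u i) + ρ (i + 1) * negpart (u i))
    (hF0 : F 0 = 0) (hpos : ∀ i, 1 ≤ i → i ≤ N → 0 ≤ ρ i)
    {i : ℕ} (hi1 : 1 ≤ i) (hiN : i ≤ N) :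
    ρ i * negpart (u (i - 1)) ≤ F (i - 1) := by
  rcases hi1.eq_or_lt with rfl | hlt
  · simp [hF0, hu0, negpart]
  · rw [hF (i - 1) (by omega) (by omega), Nat.sub_add_cancel hi1, le_add_iff_nonneg_left]
    exact mul_nonneg (hpos (i - 1) (by omega) (by omega)) (pospart_nonneg _)

end UpwindFlux

theorem stmt_5_general (N : ℕ) (dx dt : ℝ) (hdx : 0 < dx) (hdt : 0 < dt)
    (ρn ρn1 u F : ℕ → ℝ)
    (hu0 : u 0 = 0) (huN : u N = 0)
    (hF : ∀ i, 1 ≤ i → i ≤ N - 1 →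
      F i = ρn i * pospart (u i) + ρn (i + 1) * negpart (u i))
    (hF0 : F 0 = 0) (hFN : F N = 0)
    (hupd : ∀ i, 1 ≤ i → i ≤ N → ρn1 i = ρn i - dt / dx * (F i - F (i - 1)))
    (hpos : ∀ i, 1 ≤ i → i ≤ N → 0 ≤ ρn i)
    (hCFL : ∀ i, 1 ≤ i → i ≤ N →
      dt * (pospart (u i) - negpart (u (i - 1))) ≤ dx) :
    ∀ i, 1 ≤ i → i ≤ N → 0 ≤ ρn1 i := by
  intro i hi1 hiN
  have hCFL' : dt / dx * (pospart (u i) - negpart (u (i - 1))) ≤ 1 := by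
    rw [div_mul_eq_mul_div, div_le_one hdx]
    exact hCFL i hi1 hiN
  rw [hupd i hi1 hiN]
  exact explicit_update_nonneg (div_pos hdt hdx).le (hpos i hi1 hiN)
    (upwind_flux_le_outflow huN hF hFN hpos hi1 hiN)
    (inflow_le_upwind_flux hu0 hF hF0 hpos hi1 hiN) hCFL'

/-- positivity of the first-order explicit-reconstruction scheme under the
CFL condition `Δt·(u_{i+1/2}⁺ − u_{i−1/2}⁻) ≤ Δx` (with `u_{1/2} = u_{N+1/2} = 0`), for
arbitrary interface velocities and no-flux boundary conditions. -/
theorem stmt_5 (N : ℕ) (hN : 2 ≤ N) (dx dt : ℝ) (hdx : 0 < dx) (hdt : 0 < dt)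
    (ρn ρn1 u F : ℕ → ℝ)
    (hu0 : u 0 = 0) (huN : u N = 0)
    (hF : ∀ i, 1 ≤ i → i ≤ N - 1 →
      F i = ρn i * pospart (u i) + ρn (i + 1) * negpart (u i))
    (hF0 : F 0 = 0) (hFN : F N = 0)
    (hupd : ∀ i, 1 ≤ i → i ≤ N → ρn1 i = ρn i - dt / dx * (F i - F (i - 1)))
    (hpos : ∀ i, 1 ≤ i → i ≤ N → 0 ≤ ρn i)
    (hCFL : ∀ i, 1 ≤ i → i ≤ N →
      dt * (pospart (u i) - negpart (u (i - 1))) ≤ dx) :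
    ∀ i, 1 ≤ i → i ≤ N → 0 ≤ ρn1 i :=
  stmt_5_general N dx dt hdx hdt ρn ρn1 u F hu0 huN hF hF0 hFN hupd hpos hCFL
end

section
/- (Unconditional positivity of the two-dimensional dimensionally-split implicit scheme S2.) Let N ≥ 2, Δx, Δy, Δt > 0. Suppose ρⁿ, ρ^{n+1/2}, ρⁿ⁺¹ ∈ ℝ^{N×N} and real interface velocities u_{i+1/2,j} (1 ≤ i ≤ N−1) and v_{i,j+1/2} (1 ≤ j ≤ N−1) satisfy: Step 1: F_{i+1/2,j} = ρ^{n+1/2}_{ij}·u_{i+1/2,j}⁺ + ρ^{n+1/2}_{i+1,j}·u_{i+1/2,j}⁻, F_{1/2,j} = F_{N+1/2,j} = 0, and ρ^{n+1/2}_{ij} = ρⁿ_{ij} − (Δt/Δx)(F_{i+1/2,j} − F_{i−1/2,j}); Step 2: G_{i,j+1/2} = ρⁿ⁺¹_{ij}·v_{i,j+1/2}⁺ + ρⁿ⁺¹_{i,j+1}·v_{i,j+1/2}⁻, G_{i,1/2} = G_{i,N+1/2} = 0, and ρⁿ⁺¹_{ij} = ρ^{n+1/2}_{ij} − (Δt/Δy)(G_{i,j+1/2}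 − G_{i,j−1/2}). If ρⁿ_{ij} ≥ 0 for all i,j, then ρⁿ⁺¹_{ij} ≥ 0 for all i,j, with no restriction on Δt, Δx, Δy, or the velocities. -/
/-!
Each half-step is the one-dimensional implicit upwind scheme `ρ = r - c (Fᵢ - Fᵢ₋₁)`, `c ≥ 0`,
with zero boundary flux, so it suffices to show that this scheme preserves nonnegativity.
Sum the update over the set `S` of cells where `ρ` is negative. By summation by parts the flux
differences add up to the net flux leaving `S`, and this is `≤ 0`: an upwind flux
`ρᵢ u⁺ + ρᵢ₊₁ u⁻` between a negative and a nonnegative cell always points toward the negative one.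
Hence `∑_{i ∈ S} ρᵢ ≥ ∑_{i ∈ S} rᵢ ≥ 0`, although every term on the left is negative; so `S = ∅`.
-/

open Finset

noncomputable def upwindFlux (a b w : ℝ) : ℝ := a * pospart w + b * negpart w

noncomputable def negIndicator (x : ℝ) : ℝ := if x < 0 then 1 else 0

lemma negIndicator_mul_self (x : ℝ) : negIndicator x * x = negpart x := by
  unfold negIndicator negpart
  split_ifs with h
  · rw [one_mul, min_eq_left h.le]
  · rw [zero_mul, min_eq_right (not_lt.mp h)]

lemma negIndicator_nonneg (x : ℝ) : 0 ≤ negIndicator x := by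
  unfold negIndicator; split_ifs <;> norm_num

lemma negIndicator_sub_mul_upwindFlux_nonpos (a b w : ℝ) :
    (negIndicator a - negIndicator b) * upwindFlux a b w ≤ 0 := by
  have hp : 0 ≤ pospart w := le_max_right _ _
  have hn : negpart w ≤ 0 := min_le_right _ _
  unfold negIndicator upwindFlux
  split_ifs with ha hb hb <;> nlinarith

lemma sum_range_mul_sub_eq (s F : ℕ → ℝ) (n : ℕ) :
    ∑ i ∈ range n, s (i + 1) * (F (i + 1) - F i) =
      s n * F n - s 0 * F 0 + ∑ i ∈ range n, (s i - s (i + 1)) * F i := by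
  rw [← sum_range_sub (fun i => s i * F i), ← sum_add_distrib]
  exact sum_congr rfl fun i _ => by ring

theorem implicitUpwind_nonneg (N : ℕ) (c : ℝ) (hc : 0 ≤ c) (r ρ u F : ℕ → ℝ)
    (hF : ∀ i, 1 ≤ i → i ≤ N - 1 → F i = upwindFlux (ρ i) (ρ (i + 1)) (u i))
    (hF0 : F 0 = 0) (hFN : F N = 0)
    (hupd : ∀ i, 1 ≤ i → i ≤ N → ρ i = r i - c * (F i - F (i - 1)))
    (hr : ∀ i, 1 ≤ i → i ≤ N → 0 ≤ r i) :
    ∀ i, 1 ≤ i → i ≤ N → 0 ≤ ρ i := by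
  set s : ℕ → ℝ := fun i => negIndicator (ρ i)
  have hflux : ∑ i ∈ range N, s (i + 1) * (F (i + 1) - F i) ≤ 0 := by
    rw [sum_range_mul_sub_eq, hF0, hFN, mul_zero, mul_zero, sub_zero, zero_add]
    refine sum_nonpos fun i hi => ?_
    rcases Nat.eq_zero_or_pos i with rfl | hi0
    · rw [hF0, mul_zero]
    · rw [hF i hi0 (Nat.le_sub_one_of_lt (mem_range.mp hi))]
      exact negIndicator_sub_mul_upwindFlux_nonpos _ _ _
  have hmass : 0 ≤ ∑ i ∈ range N, negpart (ρ (i + 1)) := by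
    have hr_mass : 0 ≤ ∑ i ∈ range N, s (i + 1) * r (i + 1) :=
      sum_nonneg fun i hi =>
        mul_nonneg (negIndicator_nonneg _) (hr _ (by omega) (mem_range.mp hi))
    calc (0 : ℝ) ≤ ∑ i ∈ range N, s (i + 1) * r (i + 1)
          - c * ∑ i ∈ range N, s (i + 1) * (F (i + 1) - F i) := by
          linarith [mul_nonpos_of_nonneg_of_nonpos hc hflux]
      _ = ∑ i ∈ range N, negpart (ρ (i + 1)) := by
        rw [mul_sum, ← sum_sub_distrib]
        refine sum_congr rfl fun i hi => ?_
        have h := hupd (i + 1) (by omega) (mem_range.mp hi)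
        rw [Nat.add_sub_cancel] at h
        rw [← negIndicator_mul_self]
        linear_combination (-negIndicator (ρ (i + 1))) * h
  have hzero := (sum_eq_zero_iff_of_nonpos fun i _ => min_le_right (ρ (i + 1)) 0).mp
    (le_antisymm (sum_nonpos fun i _ => min_le_right _ _) hmass)
  intro i hi1 hiN
  obtain ⟨k, rfl⟩ : ∃ k, i = k + 1 := ⟨i - 1, by omega⟩
  exact min_eq_right_iff.mp (hzero k (mem_range.mpr (by omega)))

theorem stmt_12_general (N : ℕ) (dx dy dt : ℝ)
    (hdx : 0 < dx) (hdy : 0 < dy) (hdt : 0 < dt)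
    (ρn ρh ρn1 u v F G : ℕ → ℕ → ℝ)
    -- Step 1: implicit evolution in the x-direction
    (hF : ∀ i j, 1 ≤ i → i ≤ N - 1 → 1 ≤ j → j ≤ N →
      F i j = ρh i j * pospart (u i j) + ρh (i + 1) j * negpart (u i j))
    (hF0 : ∀ j, 1 ≤ j → j ≤ N → F 0 j = 0)
    (hFN : ∀ j, 1 ≤ j → j ≤ N → F N j = 0)
    (hupd1 : ∀ i j, 1 ≤ i → i ≤ N → 1 ≤ j → j ≤ N →
      ρh i j = ρn i j - dt / dx * (F i j - F (i - 1) j))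
    -- Step 2: implicit evolution in the y-direction
    (hG : ∀ i j, 1 ≤ i → i ≤ N → 1 ≤ j → j ≤ N - 1 →
      G i j = ρn1 i j * pospart (v i j) + ρn1 i (j + 1) * negpart (v i j))
    (hG0 : ∀ i, 1 ≤ i → i ≤ N → G i 0 = 0)
    (hGN : ∀ i, 1 ≤ i → i ≤ N → G i N = 0)
    (hupd2 : ∀ i j, 1 ≤ i → i ≤ N → 1 ≤ j → j ≤ N →
      ρn1 i j = ρh i j - dt / dy * (G i j - G i (j - 1)))
    (hpos : ∀ i j, 1 ≤ i → i ≤ N → 1 ≤ j → j ≤ N → 0 ≤ ρn i j) :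
    ∀ i j, 1 ≤ i → i ≤ N → 1 ≤ j → j ≤ N → 0 ≤ ρn1 i j := by
  have hhalf : ∀ i j, 1 ≤ i → i ≤ N → 1 ≤ j → j ≤ N → 0 ≤ ρh i j :=
    fun i j hi1 hiN hj1 hjN =>
      implicitUpwind_nonneg N (dt / dx) (div_pos hdt hdx).le (ρn · j) (ρh · j) (u · j) (F · j)
        (fun i h1 h2 => hF i j h1 h2 hj1 hjN) (hF0 j hj1 hjN) (hFN j hj1 hjN)
        (fun i h1 h2 => hupd1 i j h1 h2 hj1 hjN) (fun i h1 h2 => hpos i j h1 h2 hj1 hjN)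
        i hi1 hiN
  intro i j hi1 hiN hj1 hjN
  exact implicitUpwind_nonneg N (dt / dy) (div_pos hdt hdy).le
    (ρh i ·) (ρn1 i ·) (v i ·) (G i ·)
    (fun j h1 h2 => hG i j hi1 hiN h1 h2) (hG0 i hi1 hiN) (hGN i hi1 hiN)
    (fun j h1 h2 => hupd2 i j hi1 hiN h1 h2) (fun j h1 h2 => hhalf i j hi1 hiN h1 h2)
    j hj1 hjN

/-- unconditional positivity of the two-dimensional dimensionally-split
implicit scheme S2, for arbitrary interface velocities, with no restriction on `Δt`,
`Δx`, `Δy`, or the velocities. -/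
theorem stmt_12 (N : ℕ) (hN : 2 ≤ N) (dx dy dt : ℝ)
    (hdx : 0 < dx) (hdy : 0 < dy) (hdt : 0 < dt)
    (ρn ρh ρn1 u v F G : ℕ → ℕ → ℝ)
    -- Step 1: implicit evolution in the x-direction
    (hF : ∀ i j, 1 ≤ i → i ≤ N - 1 → 1 ≤ j → j ≤ N →
      F i j = ρh i j * pospart (u i j) + ρh (i + 1) j * negpart (u i j))
    (hF0 : ∀ j, 1 ≤ j → j ≤ N → F 0 j = 0)
    (hFN : ∀ j, 1 ≤ j → j ≤ N → F N j = 0)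
    (hupd1 : ∀ i j, 1 ≤ i → i ≤ N → 1 ≤ j → j ≤ N →
      ρh i j = ρn i j - dt / dx * (F i j - F (i - 1) j))
    -- Step 2: implicit evolution in the y-direction
    (hG : ∀ i j, 1 ≤ i → i ≤ N → 1 ≤ j → j ≤ N - 1 →
      G i j = ρn1 i j * pospart (v i j) + ρn1 i (j + 1) * negpart (v i j))
    (hG0 : ∀ i, 1 ≤ i → i ≤ N → G i 0 = 0)
    (hGN : ∀ i, 1 ≤ i → i ≤ N → G i N = 0)
    (hupd2 : ∀ i j, 1 ≤ i → i ≤ N → 1 ≤ j → j ≤ N →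
      ρn1 i j = ρh i j - dt / dy * (G i j - G i (j - 1)))
    (hpos : ∀ i j, 1 ≤ i → i ≤ N → 1 ≤ j → j ≤ N → 0 ≤ ρn i j) :
    ∀ i j, 1 ≤ i → i ≤ N → 1 ≤ j → j ≤ N → 0 ≤ ρn1 i j :=
  stmt_12_general N dx dy dt hdx hdy hdt ρn ρh ρn1 u v F G hF hF0 hFN hupd1 hG hG0 hGN hupd2 hpos
end
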